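/- Consider layer widths m₀ = n, m₁, …, mₖ (k ≥ 2), weights W^{i+1} ∈ ℝ^{m_{i+1}×m_i} for i = 0,…,k−1, biases b^{i+1} ∈ ℝ^{m_{i+1}}, scalar activations φ^{i+1} incrementally sector bounded by [α^{i+1}, β^{i+1}] on ℝ applied componentwise as Φ^{i+1}, layer maps w⁰(x) = x and w^{i+1}(x) = Φ^{i+1}(W^{i+1}·w^{i}(x) + b^{i+1}), and matrices A ∈ ℝ^{n×n}, g ∈ ℝ^{n×l}, Y ∈ ℝ^{l×n}, W_min ∈ ℝ^{n×mₖ}, c ∈ ℝⁿ. Let λ̲ be the minimum eigenvalue of the symmetric matrix α¹β¹·W¹ᵀW¹ and assume λ̲ ≥ 0. Suppose there exist a symmetric positive definite S ∈ ℝ^{n×n} and constants 0 < s̲ ≤ s̄, μ > 0 with s̲·I ⪯ S ⪯ s̄·I such that for all u ∈ ℝⁿ, v⁰ ∈ ℝⁿ and vⁱ ∈ ℝ^{mᵢ}, i = 1,…,k: −μ·‖u‖² + 2·⟨u, S·v⁰⟩ + ⟨v⁰, (AS + SAᵀ + gY + Yᵀgᵀ)·v⁰⟩ + 2·⟨v⁰,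 W_min·vᵏ⟩ − 2·s̲·λ̲·⟨v⁰, S·v⁰⟩ + 2·(α¹+β¹)·⟨v¹, W¹·S·v⁰⟩ − 2·‖v¹‖² − 2·Σ_{i=1}^{k−1} ⟨v^{i+1} − α^{i+1}·W^{i+1}·vⁱ, v^{i+1} − β^{i+1}·W^{i+1}·vⁱ⟩ ≤ 0. Then, setting H = Y·S⁻¹, any two differentiable functions x₁, x₂ : [0,∞) → ℝⁿ satisfying ẋ(t) = (A + gH)·x(t) + W_min·wᵏ(x(t)) + c for all t ≥ 0 satisfy ‖x₁(t) − x₂(t)‖ ≤ √(s̄/s̲)·e^{−(s̲/(2μ))·t}·‖x₁(0) − x₂(0)‖ for all t ≥ 0. -/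

import Mathlib

open Matrix

/-- The Euclidean norm of a vector in `ℝⁿ`. -/
noncomputable def eNorm {n : ℕ} (v : Fin n → ℝ) : ℝ := Real.sqrt (v ⬝ᵥ v)

/-- Layer maps of a feedforward neural network whose layer `i+1` applies the scalar
activation `φ i` componentwise. -/
noncomputable def nnLayer (m : ℕ → ℕ)
    (W : (i : ℕ) → Matrix (Fin (m (i + 1))) (Fin (m i)) ℝ)
    (b : (i : ℕ) → Fin (m (i + 1)) → ℝ)
    (φ : ℕ → ℝ → ℝ) :
    (i : ℕ) → (Fin (m 0) → ℝ) → Fin (m i) → ℝ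
  | 0, x => x
  | i + 1, x => fun j => φ i ((W i).mulVec (nnLayer m W b φ i x) j + b i j)

/-! With `P = S⁻¹` and `e = x₁ - x₂`, the Lyapunov function `V = ⟨e, P e⟩` decays at rate
`s̲ / μ`. Evaluating the quadratic-form condition at `u = e / μ`, `v⁰ = P e` and the layer
increments `vⁱ = wⁱ(x₁) - wⁱ(x₂)` bounds `V̇` by `-‖e‖² / μ`: the incremental sector bounds make
the terms of layers `2, …, k` nonpositive, and the first-layer term, bounded below through `λ̲`,
absorbs `-2 s̲ λ̲ ⟨v⁰, S v⁰⟩`. Grönwall gives `V(t) ≤ e^{-(s̲/μ) t} V(0)`, and `s̲ I ⪯ S ⪯ s̄ I`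
turns this into the bound on `‖e‖`. -/

namespace Matrix

variable {n : Type*} [Fintype n]

theorem IsHermitian.dotProduct_mulVec_comm {M : Matrix n n ℝ} (hM : M.IsHermitian)
    (x y : n → ℝ) : x ⬝ᵥ M *ᵥ y = (M *ᵥ x) ⬝ᵥ y := by
  rw [dotProduct_mulVec, ← mulVec_transpose, ← conjTranspose_eq_transpose_of_trivial, hM.eq]

theorem dotProduct_add_transpose_mulVec_self (M : Matrix n n ℝ) (x : n → ℝ) :
    x ⬝ᵥ (M + Mᵀ) *ᵥ x = 2 * (x ⬝ᵥ M *ᵥ x) := by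
  rw [add_mulVec, dotProduct_add, dotProduct_mulVec x Mᵀ, vecMul_transpose,
    dotProduct_comm (M *ᵥ x), two_mul]

variable [DecidableEq n]

theorem IsHermitian.mul_dotProduct_le_dotProduct_mulVec {M : Matrix n n ℝ} (hM : M.IsHermitian)
    {c : ℝ} (hc : ∀ i, c ≤ hM.eigenvalues i) (x : n → ℝ) :
    c * (x ⬝ᵥ x) ≤ x ⬝ᵥ M *ᵥ x := by
  open scoped MatrixOrder in
  have hle : algebraMap ℝ (Matrix n n ℝ) c ≤ M := by
    rw [algebraMap_le_iff_le_spectrum hM.isSelfAdjoint, hM.spectrum_real_eq_range_eigenvalues]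
    rintro _ ⟨i, rfl⟩
    exact hc i
  simpa [Algebra.algebraMap_eq_smul_one, sub_mulVec, dotProduct_sub, smul_mulVec] using
    (le_iff.1 hle).dotProduct_mulVec_nonneg x

theorem PosDef.mulVec_inv_mulVec {S : Matrix n n ℝ} (hS : S.PosDef) (w : n → ℝ) :
    S *ᵥ (S⁻¹ *ᵥ w) = w := by
  rw [mulVec_mulVec, mul_nonsing_inv S hS.det_pos.ne'.isUnit, one_mulVec]

theorem PosDef.mul_dotProduct_inv_mulVec_le {S : Matrix n n ℝ} (hS : S.PosDef) {s : ℝ}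
    (hs : 0 ≤ s) (hSs : (S - s • 1).PosSemidef) (w : n → ℝ) :
    s * (w ⬝ᵥ S⁻¹ *ᵥ w) ≤ w ⬝ᵥ w := by
  set y := S⁻¹ *ᵥ w
  have hQy : (S - s • 1) *ᵥ y = w - s • y := by
    rw [sub_mulVec, hS.mulVec_inv_mulVec, smul_mulVec, one_mulVec]
  -- `‖w‖² - s ⟨w, y⟩ = ‖w - s y‖² + s ⟨y, (S - s) y⟩`
  have hQ : 0 ≤ y ⬝ᵥ (w - s • y) := by simpa [hQy] using hSs.dotProduct_mulVec_nonneg y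
  have hsq : 0 ≤ (w - s • y) ⬝ᵥ (w - s • y) := by
    simpa using dotProduct_star_self_nonneg (w - s • y)
  have hwy : w ⬝ᵥ y = y ⬝ᵥ w := dotProduct_comm w y
  simp only [dotProduct_sub, sub_dotProduct, dotProduct_smul, smul_dotProduct, smul_eq_mul]
    at hQ hsq
  nlinarith

theorem PosDef.dotProduct_le_mul_dotProduct_inv_mulVec {S : Matrix n n ℝ} (hS : S.PosDef)
    {s : ℝ} (hs : 0 < s) (hSs : (s • 1 - S).PosSemidef) (w : n → ℝ) :
    w ⬝ᵥ w ≤ s * (w ⬝ᵥ S⁻¹ *ᵥ w) := by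
  set y := S⁻¹ *ᵥ w
  have hSy : S *ᵥ y = w := hS.mulVec_inv_mulVec w
  -- `⟨w - s y, S (w - s y)⟩ = ⟨w, S w⟩ - 2 s ‖w‖² + s² ⟨w, y⟩` and `⟨w, S w⟩ ≤ s ‖w‖²`
  have hS_form : 0 ≤ (w - s • y) ⬝ᵥ S *ᵥ (w - s • y) := by
    simpa using hS.posSemidef.dotProduct_mulVec_nonneg (w - s • y)
  have hSw : 0 ≤ w ⬝ᵥ (s • 1 - S) *ᵥ w := by simpa using hSs.dotProduct_mulVec_nonneg w
  have hyS : y ⬝ᵥ S *ᵥ w = w ⬝ᵥ w := by rw [hS.1.dotProduct_mulVec_comm, hSy]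
  simp only [mulVec_sub, mulVec_smul, hSy, dotProduct_sub, sub_dotProduct, dotProduct_smul,
    smul_dotProduct, smul_eq_mul, sub_mulVec, smul_mulVec, one_mulVec] at hS_form hSw
  rw [hyS, dotProduct_comm y w] at hS_form
  nlinarith

/-- The congruence by `S⁻¹` that turns the LMI variable `Y` back into the gain `H = Y S⁻¹`. -/
theorem PosDef.lmi_congruence {l : Type*} [Fintype l] {S : Matrix n n ℝ} (hS : S.PosDef)
    (A : Matrix n n ℝ) (g : Matrix n l ℝ) (Y : Matrix l n ℝ) (e : n → ℝ) :
    (S⁻¹ *ᵥ e) ⬝ᵥ (A * S + S * Aᵀ + g * Y + Yᵀ * gᵀ) *ᵥ (S⁻¹ *ᵥ e)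
      = 2 * (e ⬝ᵥ S⁻¹ *ᵥ ((A + g * (Y * S⁻¹)) *ᵥ e)) := by
  have hSt : Sᵀ = S := by simpa using hS.1.eq
  have hM : A * S + S * Aᵀ + g * Y + Yᵀ * gᵀ = (A * S + g * Y) + (A * S + g * Y)ᵀ := by
    rw [transpose_add, transpose_mul, transpose_mul, hSt]
    abel
  have hMy : (A * S + g * Y) *ᵥ (S⁻¹ *ᵥ e) = (A + g * (Y * S⁻¹)) *ᵥ e := by
    simp only [add_mulVec, ← mulVec_mulVec, hS.mulVec_inv_mulVec]
  rw [hM, dotProduct_add_transpose_mulVec_self, hMy, hS.inv.1.dotProduct_mulVec_comm]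

end Matrix

theorem mul_dotProduct_self_le_of_sector {p q : Type*} [Fintype p] [Fintype q] [DecidableEq q]
    {W : Matrix p q ℝ} {a b : ℝ} (hH : ((a * b) • (Wᵀ * W)).IsHermitian) {lam : ℝ}
    (hlam : ∀ i, lam ≤ hH.eigenvalues i) {x : q → ℝ} {z : p → ℝ}
    (hz : (z - a • W *ᵥ x) ⬝ᵥ (z - b • W *ᵥ x) ≤ 0) :
    lam * (x ⬝ᵥ x) ≤ (a + b) * (z ⬝ᵥ W *ᵥ x) - z ⬝ᵥ z := by
  have hray := hH.mul_dotProduct_le_dotProduct_mulVec hlam x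
  rw [smul_mulVec, ← mulVec_mulVec, dotProduct_smul, dotProduct_mulVec, ← mulVec_transpose,
    transpose_transpose, smul_eq_mul] at hray
  simp only [dotProduct_sub, sub_dotProduct, dotProduct_smul, smul_dotProduct, smul_eq_mul,
    dotProduct_comm (W *ᵥ x) z] at hz
  nlinarith

section Derivatives

variable {ι : Type*} [Fintype ι] {u v : ℝ → ι → ℝ} {u' v' : ι → ℝ} {t : ℝ}

theorem HasDerivAt.dotProduct (hu : HasDerivAt u u' t) (hv : HasDerivAt v v' t) :
    HasDerivAt (fun s => u s ⬝ᵥ v s) (u' ⬝ᵥ v t + u t ⬝ᵥ v') t := by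
  simp only [_root_.dotProduct, ← Finset.sum_add_distrib]
  exact HasDerivAt.fun_sum fun i _ => (hasDerivAt_pi.1 hu i).mul (hasDerivAt_pi.1 hv i)

theorem HasDerivAt.mulVec {κ : Type*} [Fintype κ] (M : Matrix κ ι ℝ) (hu : HasDerivAt u u' t) :
    HasDerivAt (fun s => M *ᵥ u s) (M *ᵥ u') t :=
  (LinearMap.toContinuousLinearMap (Matrix.mulVecLin M)).hasFDerivAt.comp_hasDerivAt t hu

theorem HasDerivAt.dotProduct_mulVec_self {M : Matrix ι ι ℝ} (hM : M.IsHermitian)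
    (hu : HasDerivAt u u' t) :
    HasDerivAt (fun s => u s ⬝ᵥ M *ᵥ u s) (2 * (u t ⬝ᵥ M *ᵥ u')) t := by
  convert hu.dotProduct (hu.mulVec M) using 1
  rw [hM.dotProduct_mulVec_comm, dotProduct_comm, two_mul]

end Derivatives

theorem le_mul_exp_of_hasDerivAt_le {V V' : ℝ → ℝ} {K t : ℝ}
    (hV : ∀ s, 0 ≤ s → HasDerivAt V (V' s) s) (hbound : ∀ s, 0 ≤ s → V' s ≤ K * V s)
    (ht : 0 ≤ t) : V t ≤ V 0 * Real.exp (K * t) := by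
  have := le_gronwallBound_of_liminf_deriv_right_le (f := V) (ε := 0) (b := t)
    (fun s hs => (hV s hs.1).continuousAt.continuousWithinAt)
    (fun s hs _ hr => (hV s hs.1).hasDerivWithinAt.liminf_right_slope_le hr) le_rfl
    (fun s hs => by simpa using hbound s hs.1) t ⟨ht, le_rfl⟩
  simpa [gronwallBound_ε0] using this

theorem eNorm_le_mul_of_dotProduct_le {n : ℕ} {a b : Fin n → ℝ} {C : ℝ} (hC : 0 ≤ C)
    (h : a ⬝ᵥ a ≤ C ^ 2 * (b ⬝ᵥ b)) : eNorm a ≤ C * eNorm b := by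
  rw [eNorm, eNorm, ← Real.sqrt_sq hC, ← Real.sqrt_mul (sq_nonneg C)]
  exact Real.sqrt_le_sqrt h

theorem nnLayer_sub_sector {m : ℕ → ℕ} {W : (i : ℕ) → Matrix (Fin (m (i + 1))) (Fin (m i)) ℝ}
    {b : (i : ℕ) → Fin (m (i + 1)) → ℝ} {φ : ℕ → ℝ → ℝ} {α β : ℕ → ℝ}
    (hsec : ∀ i, ∀ a d : ℝ,
      (φ i a - φ i d - α i * (a - d)) * (φ i a - φ i d - β i * (a - d)) ≤ 0)
    (x x' : Fin (m 0) → ℝ) (i : ℕ) :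
    (nnLayer m W b φ (i + 1) x - nnLayer m W b φ (i + 1) x'
        - α i • W i *ᵥ (nnLayer m W b φ i x - nnLayer m W b φ i x')) ⬝ᵥ
      (nnLayer m W b φ (i + 1) x - nnLayer m W b φ (i + 1) x'
        - β i • W i *ᵥ (nnLayer m W b φ i x - nnLayer m W b φ i x')) ≤ 0 := by
  refine Finset.sum_nonpos fun j _ => ?_
  simpa [nnLayer, mulVec_sub] using hsec i ((W i *ᵥ nnLayer m W b φ i x) j + b i j)
    ((W i *ᵥ nnLayer m W b φ i x') j + b i j)

theorem lyapunov_dissipation {k : ℕ} (hk : k ≠ 0) {m : ℕ → ℕ} {l : ℕ}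
    {A : Matrix (Fin (m 0)) (Fin (m 0)) ℝ}
    {g : Matrix (Fin (m 0)) (Fin l) ℝ} {Y : Matrix (Fin l) (Fin (m 0)) ℝ}
    {W : (i : ℕ) → Matrix (Fin (m (i + 1))) (Fin (m i)) ℝ}
    {Wmin : Matrix (Fin (m 0)) (Fin (m k)) ℝ} {α β : ℕ → ℝ}
    (hHerm : ((α 0 * β 0) • ((W 0)ᵀ * W 0)).IsHermitian)
    {lam : ℝ} (hlam : ∀ i, lam ≤ hHerm.eigenvalues i) (hlam0 : 0 ≤ lam)
    {S : Matrix (Fin (m 0)) (Fin (m 0)) ℝ} (hS : S.PosDef)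
    {s₁ μ : ℝ} (hs₁ : 0 ≤ s₁) (hμ : 0 < μ)
    (hSlo : (S - s₁ • (1 : Matrix (Fin (m 0)) (Fin (m 0)) ℝ)).PosSemidef)
    (hQF : ∀ (u : Fin (m 0) → ℝ) (v : (i : ℕ) → Fin (m i) → ℝ),
      -μ * (u ⬝ᵥ u) + 2 * (u ⬝ᵥ S.mulVec (v 0))
        + v 0 ⬝ᵥ (A * S + S * Aᵀ + g * Y + Yᵀ * gᵀ).mulVec (v 0)
        + 2 * (v 0 ⬝ᵥ Wmin.mulVec (v k))
        - 2 * s₁ * lam * (v 0 ⬝ᵥ S.mulVec (v 0))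
        + 2 * (α 0 + β 0) * (v 1 ⬝ᵥ (W 0 * S).mulVec (v 0))
        - 2 * (v 1 ⬝ᵥ v 1)
        - 2 * ∑ i ∈ Finset.Ico 1 k,
            (v (i + 1) - α i • (W i).mulVec (v i)) ⬝ᵥ
              (v (i + 1) - β i • (W i).mulVec (v i)) ≤ 0)
    (Δ : (i : ℕ) → Fin (m i) → ℝ)
    (hΔ : ∀ i, (Δ (i + 1) - α i • W i *ᵥ Δ i) ⬝ᵥ (Δ (i + 1) - β i • W i *ᵥ Δ i) ≤ 0) :
    2 * (Δ 0 ⬝ᵥ S⁻¹ *ᵥ ((A + g * (Y * S⁻¹)) *ᵥ Δ 0 + Wmin *ᵥ Δ k))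
      ≤ -(s₁ / μ) * (Δ 0 ⬝ᵥ S⁻¹ *ᵥ Δ 0) := by
  set e := Δ 0
  have hSy : S *ᵥ (S⁻¹ *ᵥ e) = e := hS.mulVec_inv_mulVec e
  have hy : ∀ w, (S⁻¹ *ᵥ e) ⬝ᵥ w = e ⬝ᵥ S⁻¹ *ᵥ w := fun w => by
    rw [hS.inv.1.dotProduct_mulVec_comm]
  set v := Function.update Δ 0 (S⁻¹ *ᵥ e)
  have hv : ∀ i ≠ 0, v i = Δ i := fun i hi => Function.update_of_ne hi _ _
  have hQ := hQF (μ⁻¹ • e) v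
  rw [show v 0 = S⁻¹ *ᵥ e from Function.update_self .., hv k hk, hv 1 one_ne_zero,
    hS.lmi_congruence] at hQ
  have hsum : ∑ i ∈ Finset.Ico 1 k,
      (v (i + 1) - α i • W i *ᵥ v i) ⬝ᵥ (v (i + 1) - β i • W i *ᵥ v i) ≤ 0 :=
    Finset.sum_nonpos fun i hi => by
      rw [hv i (by grind), hv (i + 1) (by omega)]
      exact hΔ i
  have hlayer : lam * (e ⬝ᵥ e) ≤ (α 0 + β 0) * (Δ 1 ⬝ᵥ W 0 *ᵥ e) - Δ 1 ⬝ᵥ Δ 1 :=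
    mul_dotProduct_self_le_of_sector hHerm hlam (hΔ 0)
  have hsand := hS.mul_dotProduct_inv_mulVec_le hs₁ hSlo e
  simp only [smul_dotProduct, dotProduct_smul, smul_eq_mul, hSy, hy, ← mulVec_mulVec] at hQ
  rw [mulVec_add, dotProduct_add]
  have hμμ : -μ * (μ⁻¹ * (μ⁻¹ * (e ⬝ᵥ e))) = -(μ⁻¹ * (e ⬝ᵥ e)) := by field_simp
  have hs₁μ : -(s₁ / μ) * (e ⬝ᵥ S⁻¹ *ᵥ e) = -(μ⁻¹ * (s₁ * (e ⬝ᵥ S⁻¹ *ᵥ e))) := by ring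
  have hsand_lam := mul_le_mul_of_nonneg_left hsand hlam0
  have hsand_μ := mul_le_mul_of_nonneg_left hsand (inv_nonneg.2 hμ.le)
  linarith

/-- Theorem 7: with `H = Y S⁻¹`, the convex quadratic-form condition on
`(S, Y, μ)` guarantees contraction of the controlled multilayer system
`ẋ = (A + gH) x + W_min wᵏ(x) + c`. Here `lam` is the minimum eigenvalue of
`α¹β¹ · W¹ᵀW¹`, assumed nonnegative. -/
theorem controlled_multilayer_contractive_LMI
    (k : ℕ) (hk : 2 ≤ k) (m : ℕ → ℕ) (l : ℕ)
    (A : Matrix (Fin (m 0)) (Fin (m 0)) ℝ)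
    (g : Matrix (Fin (m 0)) (Fin l) ℝ) (Y : Matrix (Fin l) (Fin (m 0)) ℝ)
    (W : (i : ℕ) → Matrix (Fin (m (i + 1))) (Fin (m i)) ℝ)
    (b : (i : ℕ) → Fin (m (i + 1)) → ℝ)
    (Wmin : Matrix (Fin (m 0)) (Fin (m k)) ℝ) (c : Fin (m 0) → ℝ)
    (φ : ℕ → ℝ → ℝ) (α β : ℕ → ℝ)
    (hsec : ∀ i, ∀ a d : ℝ,
      (φ i a - φ i d - α i * (a - d)) * (φ i a - φ i d - β i * (a - d)) ≤ 0)
    (hHerm : ((α 0 * β 0) • ((W 0)ᵀ * W 0)).IsHermitian)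
    (lam : ℝ) (hlam : IsLeast (Set.range hHerm.eigenvalues) lam) (hlam0 : 0 ≤ lam)
    (S : Matrix (Fin (m 0)) (Fin (m 0)) ℝ) (hS : S.PosDef)
    (s₁ s₂ μ : ℝ) (hs₁ : 0 < s₁) (hs₁₂ : s₁ ≤ s₂) (hμ : 0 < μ)
    (hSlo : (S - s₁ • (1 : Matrix (Fin (m 0)) (Fin (m 0)) ℝ)).PosSemidef)
    (hShi : (s₂ • (1 : Matrix (Fin (m 0)) (Fin (m 0)) ℝ) - S).PosSemidef)
    (hQF : ∀ (u : Fin (m 0) → ℝ) (v : (i : ℕ) → Fin (m i) → ℝ),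
      -μ * (u ⬝ᵥ u) + 2 * (u ⬝ᵥ S.mulVec (v 0))
        + v 0 ⬝ᵥ (A * S + S * Aᵀ + g * Y + Yᵀ * gᵀ).mulVec (v 0)
        + 2 * (v 0 ⬝ᵥ Wmin.mulVec (v k))
        - 2 * s₁ * lam * (v 0 ⬝ᵥ S.mulVec (v 0))
        + 2 * (α 0 + β 0) * (v 1 ⬝ᵥ (W 0 * S).mulVec (v 0))
        - 2 * (v 1 ⬝ᵥ v 1)
        - 2 * ∑ i ∈ Finset.Ico 1 k,
            (v (i + 1) - α i • (W i).mulVec (v i)) ⬝ᵥ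
              (v (i + 1) - β i • (W i).mulVec (v i)) ≤ 0)
    (x₁ x₂ : ℝ → Fin (m 0) → ℝ)
    (hx₁ : ∀ t, 0 ≤ t → HasDerivAt x₁
      ((A + g * (Y * S⁻¹)).mulVec (x₁ t)
        + Wmin.mulVec (nnLayer m W b φ k (x₁ t)) + c) t)
    (hx₂ : ∀ t, 0 ≤ t → HasDerivAt x₂
      ((A + g * (Y * S⁻¹)).mulVec (x₂ t)
        + Wmin.mulVec (nnLayer m W b φ k (x₂ t)) + c) t) :
    ∀ t, 0 ≤ t →
      eNorm (x₁ t - x₂ t) ≤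
        Real.sqrt (s₂ / s₁) * Real.exp (-(s₁ / (2 * μ)) * t) * eNorm (x₁ 0 - x₂ 0) := by
  intro t ht
  set e : ℝ → Fin (m 0) → ℝ := fun τ => x₁ τ - x₂ τ
  set V : ℝ → ℝ := fun τ => e τ ⬝ᵥ S⁻¹ *ᵥ e τ
  set Δ : ℝ → (i : ℕ) → Fin (m i) → ℝ :=
    fun τ i => nnLayer m W b φ i (x₁ τ) - nnLayer m W b φ i (x₂ τ)
  have he : ∀ τ, 0 ≤ τ → HasDerivAt e ((A + g * (Y * S⁻¹)) *ᵥ e τ + Wmin *ᵥ Δ τ k) τ :=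
    fun τ hτ => ((hx₁ τ hτ).sub (hx₂ τ hτ)).congr_deriv (by simp only [e, Δ, mulVec_sub]; abel)
  have hV := le_mul_exp_of_hasDerivAt_le (fun τ hτ => (he τ hτ).dotProduct_mulVec_self hS.inv.1)
    (fun τ _ => lyapunov_dissipation (by omega) hHerm (fun i => hlam.2 ⟨i, rfl⟩) hlam0 hS hs₁.le
      hμ hSlo hQF (Δ τ) (nnLayer_sub_sector hsec _ _)) ht
  have hs₂ : 0 ≤ s₂ := hs₁.le.trans hs₁₂
  have hrate : (Real.sqrt (s₂ / s₁) * Real.exp (-(s₁ / (2 * μ)) * t)) ^ 2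
      = s₂ / s₁ * Real.exp (-(s₁ / μ) * t) := by
    rw [mul_pow, Real.sq_sqrt (by positivity), ← Real.exp_nat_mul]
    congr 2
    push_cast
    field_simp
  refine eNorm_le_mul_of_dotProduct_le (by positivity) ?_
  calc e t ⬝ᵥ e t ≤ s₂ * V t :=
        hS.dotProduct_le_mul_dotProduct_inv_mulVec (hs₁.trans_le hs₁₂) hShi _
    _ ≤ s₂ * (V 0 * Real.exp (-(s₁ / μ) * t)) := by gcongr
    _ ≤ s₂ * (s₁⁻¹ * (e 0 ⬝ᵥ e 0) * Real.exp (-(s₁ / μ) * t)) := by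
      gcongr
      rw [le_inv_mul_iff₀ hs₁]
      exact hS.mul_dotProduct_inv_mulVec_le hs₁.le hSlo _
    _ = _ := by rw [hrate]; ring
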